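/- For all $k,\ell\in\{1,\dots,m\}$ one has $\Phi_\mathbf{i}\big(\varphi'_\mathbf{i}(\varepsilon_k),\ \varphi'_\mathbf{i}(\varepsilon_\ell)\big)=(\omega_{i_k}-w_k\omega_{i_k},\ w_\ell\omega_{i_\ell})$ if $k<\ell$, and $=(w_\ell\omega_{i_\ell}-\omega_{i_\ell},\ \omega_{i_k})$ if $k\ge\ell$. -/

import Mathlib

open Finset

/-- The weight lattice `𝒫`: the free abelian group with basis `{αᵢ, ωᵢ : i ∈ I}`,
represented by pairs of coefficient vectors (first component: coefficients of the `αᵢ`,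
second component: coefficients of the `ωᵢ`). -/
abbrev PLat (n : ℕ) := (Fin n → ℤ) × (Fin n → ℤ)

/-- The coroot lattice `𝒬^∨`: the free abelian group with basis `{αᵢ^∨ : i ∈ I}`,
represented by coefficient vectors. -/
abbrev QvLat (n : ℕ) := Fin n → ℤ

variable {n : ℕ}

/-- The basis element `α_j^∨` of `𝒬^∨`. -/
def coroot (j : Fin n) : QvLat n := fun k => if k = j then 1 else 0

/-- The basis element `α_j` of `𝒫`. -/
def alP (j : Fin n) : PLat n := (fun k => if k = j then 1 else 0, 0)

/-- The basis element `ω_j` of `𝒫`. -/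
def omP (j : Fin n) : PLat n := (0, fun k => if k = j then 1 else 0)

/-- The biadditive pairing `𝒬^∨ × 𝒫 → ℤ` with `(αᵢ^∨, α_j) = a_{ij}` and
`(αᵢ^∨, ω_j) = δ_{ij}`. -/
def pairQP (A : Fin n → Fin n → ℤ) (x : QvLat n) (lam : PLat n) : ℤ :=
  (∑ a, ∑ b, x a * A a b * lam.1 b) + ∑ a, x a * lam.2 a

/-- The simple reflection `sᵢ` on `𝒫`: `sᵢ α_j = α_j - a_{ij} αᵢ`,
`sᵢ ω_j = ω_j - δ_{ij} αᵢ`. -/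
def sP (A : Fin n → Fin n → ℤ) (a : Fin n) (lam : PLat n) : PLat n :=
  (fun j => if j = a then lam.1 a - ((∑ k, A a k * lam.1 k) + lam.2 a) else lam.1 j,
   lam.2)

/-- The simple reflection `sᵢ^∨` on `𝒬^∨`: `sᵢ^∨ α_j^∨ = α_j^∨ - a_{ji} αᵢ^∨`. -/
def sQ (A : Fin n → Fin n → ℤ) (a : Fin n) (x : QvLat n) : QvLat n :=
  fun j => if j = a then x a - ∑ k, A k a * x k else x j

/-- `w_ℓ = s_{i₁} ∘ ⋯ ∘ s_{i_ℓ}` on `𝒫` (with `w₀ = id`). -/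
def wP (A : Fin n → Fin n → ℤ) (ii : ℕ → Fin n) : ℕ → PLat n → PLat n
  | 0 => id
  | (l+1) => wP A ii l ∘ sP A (ii (l+1))

/-- `w_ℓ^∨ = s_{i₁}^∨ ∘ ⋯ ∘ s_{i_ℓ}^∨` on `𝒬^∨` (with `w₀ = id`). -/
def wQ (A : Fin n → Fin n → ℤ) (ii : ℕ → Fin n) : ℕ → QvLat n → QvLat n
  | 0 => id
  | (l+1) => wQ A ii l ∘ sQ A (ii (l+1))

/-- `k⁺ = min({ℓ : k < ℓ ≤ m, i_ℓ = i_k} ∪ {m+1})`. -/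
noncomputable def kplus (ii : ℕ → Fin n) (m k : ℕ) : ℕ :=
  sInf ({l | k < l ∧ l ≤ m ∧ ii l = ii k} ∪ {m+1})

/-- `k⁻ = max({ℓ : 1 ≤ ℓ < k, i_ℓ = i_k} ∪ {0})`. -/
noncomputable def kminus (ii : ℕ → Fin n) (k : ℕ) : ℕ :=
  sSup ({l | 1 ≤ l ∧ l < k ∧ ii l = ii k} ∪ {0})

/-- The standard basis vector `ε_k` of `ℤ^m` (1-based index), with the convention
`ε_s = 0` for `s ∉ {1,…,m}`. -/
def eps (m k : ℕ) : Fin m → ℤ := fun j => if (j : ℕ) + 1 = k then 1 else 0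

/-- `φ_𝐢(ε_k) = -ε_k - ε_{k⁻} - ∑_{ℓ : ℓ < k < ℓ⁺} a_{i_ℓ i_k} ε_ℓ`. -/
noncomputable def phiE (A : Fin n → Fin n → ℤ) (ii : ℕ → Fin n) (m k : ℕ) :
    Fin m → ℤ :=
  -(eps m k) - eps m (kminus ii k)
    - ∑ l : Fin m, (if (l:ℕ)+1 < k ∧ k < kplus ii m ((l:ℕ)+1)
        then A (ii ((l:ℕ)+1)) (ii k) else 0) • eps m ((l:ℕ)+1)

/-- The endomorphism `φ_𝐢` of `ℤ^m`, extended additively from its values on the basis. -/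
noncomputable def phiMap (A : Fin n → Fin n → ℤ) (ii : ℕ → Fin n) (m : ℕ)
    (v : Fin m → ℤ) : Fin m → ℤ :=
  ∑ k : Fin m, v k • phiE A ii m ((k:ℕ)+1)

/-- `φ'_𝐢(ε_ℓ) = -∑_{k=1}^{ℓ} (w_k^∨ α_{i_k}^∨, w_ℓ ω_{i_ℓ}) ε_k`. -/
def phiE' (A : Fin n → Fin n → ℤ) (ii : ℕ → Fin n) (m l : ℕ) : Fin m → ℤ :=
  -∑ k : Fin m, (if (k:ℕ)+1 ≤ l then
      pairQP A (wQ A ii ((k:ℕ)+1) (coroot (ii ((k:ℕ)+1)))) (wP A ii l (omP (ii l)))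
    else 0) • eps m ((k:ℕ)+1)

/-- The endomorphism `φ'_𝐢` of `ℤ^m`, extended additively from its values on the basis. -/
def phiMap' (A : Fin n → Fin n → ℤ) (ii : ℕ → Fin n) (m : ℕ)
    (v : Fin m → ℤ) : Fin m → ℤ :=
  ∑ l : Fin m, v l • phiE' A ii m ((l:ℕ)+1)

/-- `∂_𝐢 ε_k = ε_k - ε_{k⁻}`. -/
noncomputable def derE (ii : ℕ → Fin n) (m k : ℕ) : Fin m → ℤ :=
  eps m k - eps m (kminus ii k)

/-- The endomorphism `∂_𝐢` of `ℤ^m`. -/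
noncomputable def derMap (ii : ℕ → Fin n) (m : ℕ) (v : Fin m → ℤ) : Fin m → ℤ :=
  ∑ k : Fin m, v k • derE ii m ((k:ℕ)+1)

/-- `∫_𝐢 ε_k = ε_k + ε_{k⁻} + ε_{(k⁻)⁻} + ⋯` (summing along the chain `k > k⁻ > ⋯ > 0`). -/
noncomputable def intE (ii : ℕ → Fin n) (m : ℕ) (k : ℕ) : Fin m → ℤ :=
  if h : kminus ii k < k then eps m k + intE ii m (kminus ii k) else eps m k
termination_by k
decreasing_by exact h

/-- The endomorphism `∫_𝐢` of `ℤ^m`. -/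
noncomputable def intMap (ii : ℕ → Fin n) (m : ℕ) (v : Fin m → ℤ) : Fin m → ℤ :=
  ∑ k : Fin m, v k • intE ii m ((k:ℕ)+1)

/-- The skew-symmetric biadditive form `Λ_𝐢` on `ℤ^m` with
`Λ_𝐢(ε_k, ε_ℓ) = sgn(k-ℓ) c_{i_k i_ℓ}` where `c_{ij} = dᵢ a_{ij}`. -/
def LamF (A : Fin n → Fin n → ℤ) (d : Fin n → ℤ) (ii : ℕ → Fin n) (m : ℕ)
    (a b : Fin m → ℤ) : ℤ :=
  ∑ k : Fin m, ∑ l : Fin m, a k * b l *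
    ((((k:ℕ):ℤ) - ((l:ℕ):ℤ)).sign *
      (d (ii ((k:ℕ)+1)) * A (ii ((k:ℕ)+1)) (ii ((l:ℕ)+1))))

/-- The biadditive form `Φ_𝐢` on `ℤ^m` with `Φ_𝐢(ε_k,ε_ℓ) = -d_{i_k}` if `k = ℓ`,
`= -c_{i_ℓ i_k}` if `ℓ < k`, and `= 0` if `ℓ > k`. -/
def PhiF (A : Fin n → Fin n → ℤ) (d : Fin n → ℤ) (ii : ℕ → Fin n) (m : ℕ)
    (a b : Fin m → ℤ) : ℤ :=
  ∑ k : Fin m, ∑ l : Fin m, a k * b l *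
    (if (k:ℕ) = (l:ℕ) then -(d (ii ((k:ℕ)+1)))
     else if (l:ℕ) < (k:ℕ) then
       -(d (ii ((l:ℕ)+1)) * A (ii ((l:ℕ)+1)) (ii ((k:ℕ)+1)))
     else 0)

/-- The entry `b_{pk}` of the exchange matrix `B̃_𝐢`. -/
noncomputable def bcoef (A : Fin n → Fin n → ℤ) (ii : ℕ → Fin n) (m p k : ℕ) : ℤ :=
  if p = kminus ii k then -1
  else if p < k ∧ k < kplus ii m p ∧ kplus ii m p < kplus ii m k then
    -(A (ii p) (ii k))
  else if k < p ∧ p < kplus ii m k ∧ kplus ii m k < kplus ii m p then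
    A (ii p) (ii k)
  else if p = kplus ii m k then 1
  else 0

/-- The column `𝐛^k = ∑_p b_{pk} ε_p ∈ ℤ^m` of the exchange matrix. -/
noncomputable def bvec (A : Fin n → Fin n → ℤ) (ii : ℕ → Fin n) (m k : ℕ) :
    Fin m → ℤ :=
  fun p => bcoef A ii m ((p:ℕ)+1) k

/-- `ρ_𝐢⁺(ε_k) = ε_k + ∑_{ℓ<k, ℓ⁺=m+1} a_{i_ℓ i_k} ε_ℓ`. -/
noncomputable def rhoPE (A : Fin n → Fin n → ℤ) (ii : ℕ → Fin n) (m k : ℕ) :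
    Fin m → ℤ :=
  eps m k + ∑ l : Fin m, (if (l:ℕ)+1 < k ∧ kplus ii m ((l:ℕ)+1) = m+1
      then A (ii ((l:ℕ)+1)) (ii k) else 0) • eps m ((l:ℕ)+1)

/-- `ρ_𝐢⁻(ε_k) = ε_k - ∑_{ℓ≤k, ℓ⁺=m+1} a_{i_ℓ i_k} ε_ℓ`. -/
noncomputable def rhoME (A : Fin n → Fin n → ℤ) (ii : ℕ → Fin n) (m k : ℕ) :
    Fin m → ℤ :=
  eps m k - ∑ l : Fin m, (if (l:ℕ)+1 ≤ k ∧ kplus ii m ((l:ℕ)+1) = m+1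
      then A (ii ((l:ℕ)+1)) (ii k) else 0) • eps m ((l:ℕ)+1)

/-- The endomorphism `ρ_𝐢⁺` of `ℤ^m`. -/
noncomputable def rhoPMap (A : Fin n → Fin n → ℤ) (ii : ℕ → Fin n) (m : ℕ)
    (v : Fin m → ℤ) : Fin m → ℤ :=
  ∑ k : Fin m, v k • rhoPE A ii m ((k:ℕ)+1)

/-- The endomorphism `ρ_𝐢⁻` of `ℤ^m`. -/
noncomputable def rhoMMap (A : Fin n → Fin n → ℤ) (ii : ℕ → Fin n) (m : ℕ)
    (v : Fin m → ℤ) : Fin m → ℤ :=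
  ∑ k : Fin m, v k • rhoME A ii m ((k:ℕ)+1)

/-- `𝐚_λ = -∑_{k=1}^m (w_k^∨ α_{i_k}^∨, w_m λ) ε_k ∈ ℤ^m`. -/
def avec (A : Fin n → Fin n → ℤ) (ii : ℕ → Fin n) (m : ℕ) (lam : PLat n) :
    Fin m → ℤ :=
  fun k => -(pairQP A (wQ A ii ((k:ℕ)+1) (coroot (ii ((k:ℕ)+1)))) (wP A ii m lam))

/-- `|𝐚| = ∑_{k=1}^m a_k α_{i_k} ∈ 𝒬 ⊆ 𝒫`. -/
def degP (ii : ℕ → Fin n) (m : ℕ) (a : Fin m → ℤ) : PLat n :=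
  (fun j => ∑ k : Fin m, if ii ((k:ℕ)+1) = j then a k else 0, 0)

/-- The pairing `(μ, λ) = ∑ mᵢ dᵢ (αᵢ^∨, λ)` for `μ = ∑ mᵢ αᵢ ∈ 𝒬` and `λ ∈ 𝒫`
(induced by identifying `αᵢ` with `dᵢ αᵢ^∨`). -/
def pairAl (A : Fin n → Fin n → ℤ) (d : Fin n → ℤ) (mu lam : PLat n) : ℤ :=
  ∑ j, mu.1 j * (d j * pairQP A (coroot j) lam)

/-!
Let `B` be the `W`-invariant form on `𝒫` with `B(αᵢ, λ) = dᵢ (αᵢ^∨, λ)`; then `(μ, λ) = B(μ, λ)`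
for `μ ∈ 𝒬`, and `Φ_𝐢(ε_s, ε_t) = -B(α_{i_t}, α_{i_s})` for `t < s`.
Since `(w_t^∨ α_{i_t}^∨, x) = (α_{i_t}^∨, w_t⁻¹ x)` and `w_t⁻¹ = s_{i_t} w_{t-1}⁻¹`, the
coordinates of `φ'_𝐢` telescope: `∑_{a < t ≤ b} (w_t^∨ α_{i_t}^∨, x) α_{i_t} = w_b⁻¹ x - w_a⁻¹ x`.
For `x = w_ℓ ω_{i_ℓ}` this makes `∑_{t ≤ ℓ} (w_t^∨ α_{i_t}^∨, x) Φ_𝐢(ε_s, ε_t)` equal to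
`B(x, α_{i_s})` if `s ≤ ℓ` (the diagonal term cancels the last summand because `s_{i_s}` negates
the `α_{i_s}^∨`-coordinate) and to `B(x - ω_{i_ℓ}, α_{i_s})` if `s > ℓ`. A second telescoping
in `s`, together with `B(w_ℓ λ, w_k μ) = B(λ, w_ℓ⁻¹ w_k μ)`, gives both cases.
-/

section Reflections

variable (A : Fin n → Fin n → ℤ)

lemma pairQP_add_right (x : QvLat n) (lam mu : PLat n) :
    pairQP A x (lam + mu) = pairQP A x lam + pairQP A x mu := by
  simp only [pairQP, Prod.fst_add, Prod.snd_add, Pi.add_apply, mul_add, Finset.sum_add_distrib]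
  ring

lemma pairQP_smul_right (x : QvLat n) (c : ℤ) (lam : PLat n) :
    pairQP A x (c • lam) = c * pairQP A x lam := by
  simp only [pairQP, Prod.smul_fst, Prod.smul_snd, Pi.smul_apply, smul_eq_mul, mul_add,
    Finset.mul_sum]
  congr 1 <;> refine Finset.sum_congr rfl fun _ _ => ?_
  · exact Finset.sum_congr rfl fun _ _ => by ring
  · ring

lemma pairQP_sub_right (x : QvLat n) (lam mu : PLat n) :
    pairQP A x (lam - mu) = pairQP A x lam - pairQP A x mu := by
  simp only [pairQP, Prod.fst_sub, Prod.snd_sub, Pi.sub_apply, mul_sub, Finset.sum_sub_distrib]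
  ring

lemma pairQP_sub_left (x y : QvLat n) (lam : PLat n) :
    pairQP A (x - y) lam = pairQP A x lam - pairQP A y lam := by
  simp only [pairQP, Pi.sub_apply, sub_mul, Finset.sum_sub_distrib]
  ring

lemma pairQP_smul_left (c : ℤ) (x : QvLat n) (lam : PLat n) :
    pairQP A (c • x) lam = c * pairQP A x lam := by
  simp only [pairQP, Pi.smul_apply, smul_eq_mul, mul_add, Finset.mul_sum, mul_assoc]

lemma pairQP_coroot (j : Fin n) (lam : PLat n) :
    pairQP A (coroot j) lam = ∑ b, A j b * lam.1 b + lam.2 j := by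
  simp [pairQP, coroot, ite_mul, Finset.sum_ite_eq']

lemma pairQP_alP (x : QvLat n) (j : Fin n) : pairQP A x (alP j) = ∑ a, x a * A a j := by
  simp [pairQP, alP]

lemma pairQP_coroot_alP (i j : Fin n) : pairQP A (coroot i) (alP j) = A i j := by
  simp [pairQP_alP, coroot]

lemma sP_eq_sub (a : Fin n) (lam : PLat n) :
    sP A a lam = lam - pairQP A (coroot a) lam • alP a := by
  ext j
  · by_cases h : j = a
    · subst h; simp [sP, alP, pairQP_coroot]
    · simp [sP, alP, h]
  · simp [sP, alP]

lemma sQ_eq_sub (a : Fin n) (x : QvLat n) :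
    sQ A a x = x - pairQP A x (alP a) • coroot a := by
  ext j
  by_cases h : j = a
  · subst h; simp [sQ, coroot, pairQP_alP, mul_comm]
  · simp [sQ, coroot, h]

lemma pairQP_sQ (a : Fin n) (x : QvLat n) (lam : PLat n) :
    pairQP A (sQ A a x) lam = pairQP A x (sP A a lam) := by
  rw [sQ_eq_sub, sP_eq_sub, pairQP_sub_left, pairQP_smul_left, pairQP_sub_right,
    pairQP_smul_right]
  ring

variable {A}

lemma pairQP_coroot_sP_self (hA : ∀ i, A i i = 2) (a : Fin n) (lam : PLat n) :
    pairQP A (coroot a) (sP A a lam) = -pairQP A (coroot a) lam := by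
  rw [sP_eq_sub, pairQP_sub_right, pairQP_smul_right, pairQP_coroot_alP, hA]
  ring

lemma sP_involutive (hA : ∀ i, A i i = 2) (a : Fin n) : Function.Involutive (sP A a) := by
  intro lam
  rw [sP_eq_sub A a (sP A a lam), pairQP_coroot_sP_self hA, sP_eq_sub, neg_smul, sub_neg_eq_add,
    sub_add_cancel]

end Reflections

/-- The invariant form on `𝒫`: `(α_i, α_j) = c_{ij}`, `(α_i, ω_j) = (ω_j, α_i) = d_i δ_{ij}`,
`(ω_i, ω_j) = 0`. -/
def invForm (A : Fin n → Fin n → ℤ) (d : Fin n → ℤ) : LinearMap.BilinForm ℤ (PLat n) :=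
  LinearMap.mk₂ ℤ (fun x y => ∑ j, d j * (x.1 j * pairQP A (coroot j) y + x.2 j * y.1 j))
    (fun x x' y => by
      simp only [Prod.fst_add, Prod.snd_add, Pi.add_apply, add_mul, mul_add,
        Finset.sum_add_distrib]
      ring)
    (fun c x y => by
      simp only [Prod.smul_fst, Prod.smul_snd, Pi.smul_apply, smul_eq_mul, Finset.mul_sum]
      exact Finset.sum_congr rfl fun _ _ => by ring)
    (fun x y y' => by
      simp only [pairQP_add_right, Prod.fst_add, Pi.add_apply, mul_add, Finset.sum_add_distrib]
      ring)
    (fun c x y => by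
      simp only [pairQP_smul_right, Prod.smul_fst, Pi.smul_apply, smul_eq_mul, Finset.mul_sum]
      exact Finset.sum_congr rfl fun _ _ => by ring)

section InvForm

variable {A : Fin n → Fin n → ℤ} {d : Fin n → ℤ}

lemma invForm_apply (x y : PLat n) :
    invForm A d x y = ∑ j, d j * (x.1 j * pairQP A (coroot j) y + x.2 j * y.1 j) := rfl

lemma invForm_alP (j : Fin n) (y : PLat n) :
    invForm A d (alP j) y = d j * pairQP A (coroot j) y := by
  simp [invForm_apply, alP, Finset.sum_ite_eq']

lemma invForm_comm (hsym : ∀ i j, d i * A i j = d j * A j i) (x y : PLat n) :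
    invForm A d x y = invForm A d y x := by
  simp only [invForm_apply, pairQP_coroot, mul_add, Finset.mul_sum, Finset.sum_add_distrib]
  rw [Finset.sum_comm]
  have hentry : ∀ i j, d i * (x.1 i * (A i j * y.1 j)) = d j * (y.1 j * (A j i * x.1 i)) := by
    intro i j
    linear_combination x.1 i * y.1 j * hsym i j
  have hcomm : ∀ f g : Fin n → ℤ, ∑ j, d j * (f j * g j) = ∑ j, d j * (g j * f j) :=
    fun f g => Finset.sum_congr rfl fun _ _ => by ring
  simp only [hentry, hcomm x.1 y.2, hcomm x.2 y.1]
  ring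

lemma pairAl_eq_invForm {mu : PLat n} (hmu : mu.2 = 0) (lam : PLat n) :
    pairAl A d mu lam = invForm A d mu lam := by
  simp only [pairAl, invForm_apply, hmu, Pi.zero_apply, zero_mul, add_zero]
  exact Finset.sum_congr rfl fun _ _ => by ring

lemma invForm_sP (hA : ∀ i, A i i = 2) (hsym : ∀ i j, d i * A i j = d j * A j i)
    (a : Fin n) (x y : PLat n) :
    invForm A d (sP A a x) (sP A a y) = invForm A d x y := by
  rw [sP_eq_sub A a x, sP_eq_sub A a y]
  simp only [map_sub, map_smul, LinearMap.sub_apply, LinearMap.smul_apply, smul_eq_mul,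
    invForm_alP, pairQP_coroot_alP, hA, invForm_comm hsym x (alP a)]
  ring

end InvForm

def wPInv (A : Fin n → Fin n → ℤ) (ii : ℕ → Fin n) : ℕ → PLat n → PLat n
  | 0 => id
  | (t+1) => sP A (ii (t+1)) ∘ wPInv A ii t

/-- `(w_{t+1}^∨ α_{i_{t+1}}^∨, λ)`: the positions `t` of `𝐢` are counted from `0` here. -/
def corootPair (A : Fin n → Fin n → ℤ) (ii : ℕ → Fin n) (t : ℕ) (lam : PLat n) : ℤ :=
  pairQP A (wQ A ii (t+1) (coroot (ii (t+1)))) lam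

section Word

variable {A : Fin n → Fin n → ℤ} {d : Fin n → ℤ} {ii : ℕ → Fin n}

lemma wP_snd (t : ℕ) (lam : PLat n) : (wP A ii t lam).2 = lam.2 := by
  induction t generalizing lam with
  | zero => rfl
  | succ t ih => exact ih _

lemma pairQP_wQ (t : ℕ) (x : QvLat n) (lam : PLat n) :
    pairQP A (wQ A ii t x) lam = pairQP A x (wPInv A ii t lam) := by
  induction t generalizing x with
  | zero => rfl
  | succ t ih => exact (ih _).trans (pairQP_sQ A _ _ _)

lemma wPInv_wP (hA : ∀ i, A i i = 2) (t : ℕ) (lam : PLat n) :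
    wPInv A ii t (wP A ii t lam) = lam := by
  induction t generalizing lam with
  | zero => rfl
  | succ t ih =>
    change sP A (ii (t+1)) (wPInv A ii t (wP A ii t (sP A (ii (t+1)) lam))) = lam
    rw [ih, sP_involutive hA]

lemma invForm_wPInv (hA : ∀ i, A i i = 2) (hsym : ∀ i j, d i * A i j = d j * A j i)
    (t : ℕ) (x y : PLat n) :
    invForm A d (wPInv A ii t x) (wPInv A ii t y) = invForm A d x y := by
  induction t with
  | zero => rfl
  | succ t ih => exact (invForm_sP hA hsym _ _ _).trans ih

lemma wPInv_succ_sub (hA : ∀ i, A i i = 2) (t : ℕ) (x : PLat n) :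
    wPInv A ii (t+1) x - wPInv A ii t x = corootPair A ii t x • alP (ii (t+1)) := by
  change sP A (ii (t+1)) _ - _ = _
  rw [corootPair, pairQP_wQ]
  change _ = pairQP A _ (sP A (ii (t+1)) _) • _
  rw [pairQP_coroot_sP_self hA, sP_eq_sub, neg_smul]
  abel

lemma sum_Ico_corootPair_smul (hA : ∀ i, A i i = 2) {a b : ℕ} (hab : a ≤ b) (x : PLat n) :
    ∑ t ∈ Finset.Ico a b, corootPair A ii t x • alP (ii (t+1)) =
      wPInv A ii b x - wPInv A ii a x := by
  simp only [← wPInv_succ_sub hA]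
  exact Finset.sum_Ico_sub (fun t => wPInv A ii t x) hab

end Word

/-- `Φ_𝐢(ε_{s+1}, ε_{t+1})`: the positions `s, t` of `𝐢` are counted from `0` here. -/
def phiEntry (A : Fin n → Fin n → ℤ) (d : Fin n → ℤ) (ii : ℕ → Fin n) (s t : ℕ) : ℤ :=
  if s = t then -(d (ii (s+1)))
  else if t < s then -(d (ii (t+1)) * A (ii (t+1)) (ii (s+1)))
  else 0

section PhiSums

variable {A : Fin n → Fin n → ℤ} {d : Fin n → ℤ} {ii : ℕ → Fin n}

lemma phiEntry_of_lt {s t : ℕ} (h : t < s) :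
    phiEntry A d ii s t = -invForm A d (alP (ii (t+1))) (alP (ii (s+1))) := by
  rw [phiEntry, if_neg h.ne', if_pos h, invForm_alP, pairQP_coroot_alP]

lemma sum_corootPair_mul_phiEntry_of_le (hA : ∀ i, A i i = 2) {l s : ℕ} (hls : l ≤ s)
    (x : PLat n) :
    ∑ t ∈ Finset.range l, corootPair A ii t x * phiEntry A d ii s t =
      invForm A d (x - wPInv A ii l x) (alP (ii (s+1))) := by
  calc ∑ t ∈ Finset.range l, corootPair A ii t x * phiEntry A d ii s t
      = -invForm A d (∑ t ∈ Finset.Ico 0 l, corootPair A ii t x • alP (ii (t+1)))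
          (alP (ii (s+1))) := by
        rw [← Finset.range_eq_Ico, map_sum, LinearMap.sum_apply,
          ← Finset.sum_neg_distrib]
        refine Finset.sum_congr rfl fun t ht => ?_
        rw [phiEntry_of_lt (by simp at ht; omega), map_smul, LinearMap.smul_apply, smul_eq_mul,
          mul_neg]
    _ = invForm A d (x - wPInv A ii l x) (alP (ii (s+1))) := by
        rw [sum_Ico_corootPair_smul hA (Nat.zero_le l), ← neg_sub, map_neg, LinearMap.neg_apply,
          neg_neg]
        rfl

lemma sum_corootPair_mul_phiEntry_of_lt (hA : ∀ i, A i i = 2)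
    (hsym : ∀ i j, d i * A i j = d j * A j i) {l s : ℕ} (hsl : s < l) (x : PLat n) :
    ∑ t ∈ Finset.range l, corootPair A ii t x * phiEntry A d ii s t =
      invForm A d x (alP (ii (s+1))) := by
  have hzero : ∑ t ∈ Finset.Ico (s+1) l, corootPair A ii t x * phiEntry A d ii s t = 0 :=
    Finset.sum_eq_zero fun t ht => by
      rw [Finset.mem_Ico] at ht
      rw [phiEntry, if_neg (by omega), if_neg (by omega), mul_zero]
  have hdiag : corootPair A ii s x * phiEntry A d ii s s =
      invForm A d (wPInv A ii s x) (alP (ii (s+1))) := by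
    change pairQP A _ x * _ = _
    rw [pairQP_wQ, phiEntry, if_pos rfl, invForm_comm hsym, invForm_alP]
    change pairQP A _ (sP A _ _) * _ = _
    rw [pairQP_coroot_sP_self hA]
    ring
  rw [← Finset.sum_range_add_sum_Ico _ hsl, hzero, add_zero, Finset.sum_range_succ, hdiag,
    sum_corootPair_mul_phiEntry_of_le hA le_rfl, map_sub, LinearMap.sub_apply, sub_add_cancel]

lemma sum_sum_phiEntry_of_le (hA : ∀ i, A i i = 2) (hsym : ∀ i j, d i * A i j = d j * A j i)
    {k l : ℕ} (hkl : k ≤ l) (x y : PLat n) :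
    ∑ s ∈ Finset.range k, corootPair A ii s y *
        ∑ t ∈ Finset.range l, corootPair A ii t x * phiEntry A d ii s t =
      invForm A d x (wPInv A ii k y - y) := by
  calc _ = invForm A d x (∑ s ∈ Finset.Ico 0 k, corootPair A ii s y • alP (ii (s+1))) := by
        rw [← Finset.range_eq_Ico, map_sum]
        refine Finset.sum_congr rfl fun s hs => ?_
        rw [sum_corootPair_mul_phiEntry_of_lt hA hsym (by simp at hs; omega), map_smul,
          smul_eq_mul]
    _ = _ := by rw [sum_Ico_corootPair_smul hA (Nat.zero_le k)]; rfl

lemma sum_sum_phiEntry_of_ge (hA : ∀ i, A i i = 2) (hsym : ∀ i j, d i * A i j = d j * A j i)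
    {k l : ℕ} (hlk : l ≤ k) (x y : PLat n) :
    ∑ s ∈ Finset.range k, corootPair A ii s y *
        ∑ t ∈ Finset.range l, corootPair A ii t x * phiEntry A d ii s t =
      invForm A d x (wPInv A ii l y - y) +
        invForm A d (x - wPInv A ii l x) (wPInv A ii k y - wPInv A ii l y) := by
  rw [← Finset.sum_range_add_sum_Ico _ hlk, sum_sum_phiEntry_of_le hA hsym le_rfl,
    ← sum_Ico_corootPair_smul hA hlk, map_sum]
  congr 1
  refine Finset.sum_congr rfl fun s hs => ?_
  rw [sum_corootPair_mul_phiEntry_of_le hA (Finset.mem_Ico.1 hs).1, map_smul, smul_eq_mul]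

end PhiSums

section Coordinates

variable {A : Fin n → Fin n → ℤ} {d : Fin n → ℤ} {ii : ℕ → Fin n} {m : ℕ}

lemma sum_fin_ite_lt {M : Type*} [AddCommMonoid M] {k : ℕ} (hk : k ≤ m) (f : ℕ → M) :
    ∑ p : Fin m, (if (p : ℕ) < k then f p else 0) = ∑ p ∈ Finset.range k, f p := by
  rw [Fin.sum_univ_eq_sum_range (fun p => if p < k then f p else 0), ← Finset.sum_filter]
  congr 1
  ext p
  simp only [Finset.mem_filter, Finset.mem_range]
  omega

lemma phiE'_apply (l : ℕ) (p : Fin m) :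
    phiE' A ii m l p = if (p : ℕ) < l then -corootPair A ii p (wP A ii l (omP (ii l))) else 0 := by
  simp only [phiE', Pi.neg_apply, Finset.sum_apply, Pi.smul_apply, eps, smul_eq_mul, mul_ite,
    mul_one, mul_zero, add_left_inj, Fin.val_inj, Finset.sum_ite_eq, Finset.mem_univ, if_true,
    Nat.add_one_le_iff, corootPair, neg_ite, neg_zero]

lemma phiMap'_eps {k : ℕ} (hk : k ≤ m) : phiMap' A ii m (eps m k) = phiE' A ii m k := by
  cases k with
  | zero =>
    ext p
    simp [phiMap', eps, phiE'_apply]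
  | succ j =>
    rw [phiMap', Finset.sum_eq_single ⟨j, hk⟩]
    · simp [eps]
    · intro q _ hq
      simp [eps, Fin.ext_iff.not.1 hq]
    · simp

lemma PhiF_phiMap'_eps_eq_sum {k l : ℕ} (hk : k ≤ m) (hl : l ≤ m) :
    PhiF A d ii m (phiMap' A ii m (eps m k)) (phiMap' A ii m (eps m l)) =
      ∑ s ∈ Finset.range k, corootPair A ii s (wP A ii k (omP (ii k))) *
        ∑ t ∈ Finset.range l, corootPair A ii t (wP A ii l (omP (ii l))) * phiEntry A d ii s t := by
  change ∑ p : Fin m, ∑ q : Fin m, _ * _ * phiEntry A d ii p q = _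
  set x := wP A ii l (omP (ii l))
  set y := wP A ii k (omP (ii k))
  calc _ = ∑ p : Fin m, if (p : ℕ) < k then corootPair A ii p y *
        ∑ q : Fin m, (if (q : ℕ) < l then corootPair A ii q x * phiEntry A d ii p q else 0)
        else 0 := by
        refine Finset.sum_congr rfl fun p _ => ?_
        simp only [phiMap'_eps hk, phiMap'_eps hl, phiE'_apply]
        split_ifs
        · rw [Finset.mul_sum]
          refine Finset.sum_congr rfl fun q _ => ?_
          split_ifs <;> ring
        · simp
    _ = _ := by
        rw [sum_fin_ite_lt hk (fun s => corootPair A ii s y *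
          ∑ q : Fin m, if (q : ℕ) < l then corootPair A ii q x * phiEntry A d ii s q else 0)]
        exact Finset.sum_congr rfl fun s _ => by
          rw [sum_fin_ite_lt hl (fun t => corootPair A ii t x * phiEntry A d ii s t)]

end Coordinates

theorem Phi_phi'_eps_general {n m : ℕ}
    (A : Fin n → Fin n → ℤ) (d : Fin n → ℤ)
    (hA : ∀ i, A i i = 2)
    (hsym : ∀ i j, d i * A i j = d j * A j i)
    (ii : ℕ → Fin n)
    (k : ℕ) (hk2 : k ≤ m)
    (l : ℕ) (hl2 : l ≤ m) :
    PhiF A d ii m (phiMap' A ii m (eps m k)) (phiMap' A ii m (eps m l)) =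
      if k < l then
        pairAl A d (omP (ii k) - wP A ii k (omP (ii k))) (wP A ii l (omP (ii l)))
      else
        pairAl A d (wP A ii l (omP (ii l)) - omP (ii l)) (omP (ii k)) := by
  have hsnd : ∀ t, (omP (ii t) - wP A ii t (omP (ii t))).2 = 0 := fun t => by
    rw [Prod.snd_sub, wP_snd, sub_self]
  rw [PhiF_phiMap'_eps_eq_sum hk2 hl2]
  split_ifs with hkl
  · rw [sum_sum_phiEntry_of_le hA hsym hkl.le, wPInv_wP hA, pairAl_eq_invForm (hsnd k),
      invForm_comm hsym]
  · have hinv : invForm A d (wP A ii l (omP (ii l))) (wP A ii k (omP (ii k))) =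
        invForm A d (omP (ii l)) (wPInv A ii l (wP A ii k (omP (ii k)))) := by
      rw [← invForm_wPInv hA hsym l, wPInv_wP hA]
    rw [sum_sum_phiEntry_of_ge hA hsym (not_lt.1 hkl), wPInv_wP hA, wPInv_wP hA,
      pairAl_eq_invForm (by rw [← neg_sub, Prod.snd_neg, hsnd, neg_zero])]
    simp only [map_sub, LinearMap.sub_apply]
    linear_combination -hinv

/-- values of `Φ_𝐢` on the vectors `φ'_𝐢(ε_k)`. -/
theorem Phi_phi'_eps {n m : ℕ} (hm : 1 ≤ m)
    (A : Fin n → Fin n → ℤ) (d : Fin n → ℤ)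
    (hA : ∀ i, A i i = 2) (hd : ∀ i, 0 < d i)
    (hsym : ∀ i j, d i * A i j = d j * A j i)
    (ii : ℕ → Fin n)
    (k : ℕ) (hk1 : 1 ≤ k) (hk2 : k ≤ m)
    (l : ℕ) (hl1 : 1 ≤ l) (hl2 : l ≤ m) :
    PhiF A d ii m (phiMap' A ii m (eps m k)) (phiMap' A ii m (eps m l)) =
      if k < l then
        pairAl A d (omP (ii k) - wP A ii k (omP (ii k))) (wP A ii l (omP (ii l)))
      else
        pairAl A d (wP A ii l (omP (ii l)) - omP (ii l)) (omP (ii k)) :=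
  Phi_phi'_eps_general A d hA hsym ii k hk2 l hl2
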